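/- If (CL(X), τ_locfin) is first-countable, then the subspace NI(X) of non-isolated points of X is hereditarily separable. -/

import Mathlib

open Set TopologicalSpace

/-- The hyperspace of nonempty closed subsets of `X`. -/
structure CL (X : Type*) [TopologicalSpace X] where
  carrier : Set X
  nonempty' : carrier.Nonempty
  isClosed' : IsClosed carrier

/-- A quasi-metric: like a metric but without symmetry. -/
def IsQuasiMetric {X : Type*} (d : X → X → ℝ) : Prop :=
  (∀ x y, 0 ≤ d x y) ∧ (∀ x y, d x y = 0 ↔ x = y) ∧ (∀ x y z, d x z ≤ d x y + d y z)

/-- A space is quasi-metrizable if the balls of some quasi-metric generate its topology. -/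
def QuasiMetrizable (X : Type*) [TopologicalSpace X] : Prop :=
  ∃ d : X → X → ℝ, IsQuasiMetric d ∧
    ∀ s : Set X, IsOpen s ↔ ∀ x ∈ s, ∃ ε > 0, {y | d x y < ε} ⊆ s

/-- The set of non-isolated points of `X`. -/
def NI (X : Type*) [TopologicalSpace X] : Set X := {x | ¬ IsOpen ({x} : Set X)}

/-- A subset is countably compact if every countable open cover has a finite subcover. -/
def CountablyCompactSet {Y : Type*} [TopologicalSpace Y] (s : Set Y) : Prop :=
  ∀ f : ℕ → Set Y, (∀ n, IsOpen (f n)) → s ⊆ ⋃ n, f n → ∃ t : Finset ℕ, s ⊆ ⋃ n ∈ t, f n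

/-- A space is hemicompact if some sequence of compact sets is cofinal in the compact sets. -/
def Hemicompact (X : Type*) [TopologicalSpace X] : Prop :=
  ∃ K : ℕ → Set X, (∀ n, IsCompact (K n)) ∧ ∀ L : Set X, IsCompact L → ∃ n, L ⊆ K n

/-- The locally finite topology on `CL X`: subbase `V⁺` for `V` open and `𝒰⁻` for `𝒰` a
locally finite family of open sets. -/
def locFinTop (X : Type*) [TopologicalSpace X] : TopologicalSpace (CL X) :=
  generateFrom
    ({S | ∃ U : Set X, IsOpen U ∧ S = {A : CL X | A.carrier ⊆ U}} ∪
     {S | ∃ 𝒰 : Set (Set X), (∀ U ∈ 𝒰, IsOpen U) ∧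
        LocallyFinite (fun U : 𝒰 => (U : Set X)) ∧
        S = {A : CL X | ∀ U ∈ 𝒰, (A.carrier ∩ U).Nonempty}})

noncomputable instance (X : Type*) [TopologicalSpace X] : TopologicalSpace (CL X) :=
  locFinTop X

def HereditarilySeparable {X : Type*} [TopologicalSpace X] (A : Set X) : Prop :=
  ∀ s ⊆ A, ∃ c ⊆ s, c.Countable ∧ s ⊆ closure c

/-!
If `s ⊆ NI X` is not separable, transfinite recursion gives a left-separated sequence `x` of
length `ω₁` in `s`. A countable neighbourhood base of sets `W⁺ ∩ 𝒱⁻` at the point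
`A = closure (range x)` of `CL X` must involve an uncountable locally finite family `𝒱` of open
sets meeting `A`: otherwise some countable initial segment of `x` already lies in every basic
neighbourhood of `A`. One point of `A` in each member of `𝒱` gives an uncountable closed discrete
set `E ⊆ NI X`.

No such `E` exists: at the point `E` of `CL X` one level of the base isolates infinitely many
points `a i` of `E` by a locally finite sequence of open sets `P i`. As the `a i` are not
isolated, removing finitely many points from each `P i` defeats the `i`-th basic neighbourhood.
-/

open Set TopologicalSpace Topology Filter
open scoped Ordinal

universe u

theorem exists_forall_eq_apply_image_Iio {α β : Type*} [Preorder α] [WellFoundedLT α]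
    (G : Set β → β) : ∃ x : α → β, ∀ a, x a = G (x '' Iio a) := by
  refine ⟨wellFounded_lt.fix fun a x => G (range fun b : Iio a => x b b.2), fun a => ?_⟩
  rw [wellFounded_lt.fix_eq]
  congr 1
  ext y
  simp

theorem countable_Iio_of_lt_omega_one {o : Ordinal} (ho : o < ω₁) : (Iio o).Countable := by
  rwa [← Cardinal.le_aleph0_iff_set_countable, Cardinal.mk_Iio_ordinal, Cardinal.lift_le_aleph0,
    ← Cardinal.lt_aleph_one_iff, ← Cardinal.lt_omega_iff_card_lt]

section

variable {X : Type*} [TopologicalSpace X]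

theorem isClosed_NI : IsClosed (NI X) :=
  isOpen_compl_iff.1 <| isOpen_iff_forall_mem_open.2 fun x hx =>
    ⟨{x}, singleton_subset_iff.2 hx, not_not.1 hx, rfl⟩

theorem exists_ne_mem_of_mem_NI {x : X} (hx : x ∈ NI X) {U : Set X} (hU : IsOpen U)
    (hxU : x ∈ U) : ∃ y ∈ U, y ≠ x := by
  by_contra! h
  exact hx (eq_singleton_iff_unique_mem.2 ⟨hxU, h⟩ ▸ hU)

theorem exists_seq_mem_notMem_closure_image_Iio {s : Set X}
    (hs : ∀ c ⊆ s, c.Countable → ¬s ⊆ closure c) :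
    ∃ x : Ordinal.{u} → X, ∀ o < ω₁, x o ∈ s ∧ x o ∉ closure (x '' Iio o) := by
  have hnext (c : Set X) (hcs : c ⊆ s) (hc : c.Countable) : ∃ y ∈ s, y ∉ closure c :=
    not_subset.1 (hs c hcs hc)
  obtain ⟨y₀, -⟩ := hnext ∅ (empty_subset s) countable_empty
  have : Nonempty X := ⟨y₀⟩
  choose! next hnext_mem hnext_notMem using hnext
  obtain ⟨x, hx⟩ := exists_forall_eq_apply_image_Iio (α := Ordinal.{u}) next
  refine ⟨x, fun o => ?_⟩
  induction o using WellFoundedLT.induction with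
  | _ o ih =>
    intro ho
    have hsub : x '' Iio o ⊆ s := image_subset_iff.2 fun b hb => (ih b hb (hb.trans ho)).1
    have hcount : (x '' Iio o).Countable := (countable_Iio_of_lt_omega_one ho).image x
    rw [hx o]
    exact ⟨hnext_mem _ hsub hcount, hnext_notMem _ hsub hcount⟩

variable {ι : Type*} {f : ι → Set X} {a : ι → X}

theorem LocallyFinite.isClosed_of_subset_range [T1Space X] (hf : LocallyFinite f)
    (ha : ∀ i, a i ∈ f i) {F : Set X} (hF : F ⊆ range a) : IsClosed F := by
  have hFa : F = ⋃ i : {i // a i ∈ F}, {a i} := by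
    ext y
    simp only [mem_iUnion, mem_singleton_iff, Subtype.exists, exists_prop]
    constructor
    · intro hy
      obtain ⟨i, rfl⟩ := hF hy
      exact ⟨i, hy, rfl⟩
    · rintro ⟨i, hi, rfl⟩
      exact hi
  rw [hFa]
  exact ((hf.comp_injective Subtype.val_injective).subset fun i =>
    singleton_subset_iff.2 (ha i)).isClosed_iUnion fun _ => isClosed_singleton

theorem LocallyFinite.not_countable_range [Uncountable ι] (hf : LocallyFinite f)
    (ha : ∀ i, a i ∈ f i) : ¬(range a).Countable := fun h =>
  not_countable_univ ((h.biUnion fun b _ => (hf.point_finite b).countable).mono fun i _ =>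
    mem_biUnion (mem_range_self i) (ha i))

theorem exists_uncountable_forall_subset_isClosed_of_locallyFinite [T1Space X]
    {𝒱 : Set (Set X)} (h𝒱 : LocallyFinite ((↑) : 𝒱 → Set X)) (hunc : ¬𝒱.Countable)
    {A : Set X} (hA : ∀ V ∈ 𝒱, (A ∩ V).Nonempty) :
    ∃ E ⊆ A, ¬E.Countable ∧ ∀ F ⊆ E, IsClosed F := by
  choose a haA haV using fun V : 𝒱 => hA V V.2
  have : Uncountable 𝒱 := by rwa [← not_countable_iff, countable_coe_iff]
  exact ⟨range a, range_subset_iff.2 haA, h𝒱.not_countable_range haV,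
    fun F hF => h𝒱.isClosed_of_subset_range haV hF⟩

end

namespace CL

variable {X : Type*} [TopologicalSpace X]

-- The subbasic sets `W⁺` and `𝒰⁻` of the locally finite topology.
def upper (W : Set X) : Set (CL X) := {A | A.carrier ⊆ W}

def lower (𝒰 : Set (Set X)) : Set (CL X) := {A | ∀ U ∈ 𝒰, (A.carrier ∩ U).Nonempty}

structure IsLocFinOpenFamily (𝒱 : Set (Set X)) : Prop where
  isOpen : ∀ V ∈ 𝒱, IsOpen V
  locallyFinite : LocallyFinite ((↑) : 𝒱 → Set X)

theorem isLocFinOpenFamily_empty : IsLocFinOpenFamily (∅ : Set (Set X)) :=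
  ⟨fun _ h => h.elim, locallyFinite_of_finite _⟩

theorem isLocFinOpenFamily_singleton {U : Set X} (hU : IsOpen U) : IsLocFinOpenFamily {U} :=
  ⟨fun _ h => h ▸ hU, locallyFinite_of_finite _⟩

theorem IsLocFinOpenFamily.union {𝒰 𝒱 : Set (Set X)} (h𝒰 : IsLocFinOpenFamily 𝒰)
    (h𝒱 : IsLocFinOpenFamily 𝒱) : IsLocFinOpenFamily (𝒰 ∪ 𝒱) := by
  refine ⟨fun V hV => hV.elim (h𝒰.isOpen V) (h𝒱.isOpen V), ?_⟩
  let g : 𝒰 ⊕ 𝒱 → ↥(𝒰 ∪ 𝒱) :=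
    Sum.elim (inclusion subset_union_left) (inclusion subset_union_right)
  have hg : Function.Surjective g := by
    rintro ⟨V, hV | hV⟩
    exacts [⟨.inl ⟨V, hV⟩, rfl⟩, ⟨.inr ⟨V, hV⟩, rfl⟩]
  refine LocallyFinite.of_comp_surjective hg ?_
  convert h𝒰.locallyFinite.sumElim h𝒱.locallyFinite using 1
  ext (V | V) <;> rfl

theorem isOpen_upper {W : Set X} (hW : IsOpen W) : IsOpen (upper W) :=
  isOpen_generateFrom_of_mem (Or.inl ⟨W, hW, rfl⟩)

theorem isOpen_lower {𝒰 : Set (Set X)} (h𝒰 : IsLocFinOpenFamily 𝒰) : IsOpen (lower 𝒰) :=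
  isOpen_generateFrom_of_mem (Or.inr ⟨𝒰, h𝒰.isOpen, h𝒰.locallyFinite, rfl⟩)

theorem lower_empty : lower (∅ : Set (Set X)) = univ := by
  simp [lower]

theorem upper_univ : upper (univ : Set X) = univ := by
  simp [upper]

theorem upper_inter_upper (W W' : Set X) : upper W ∩ upper W' = upper (W ∩ W') := by
  ext A; simp [upper]

theorem lower_inter_lower (𝒰 𝒱 : Set (Set X)) : lower 𝒰 ∩ lower 𝒱 = lower (𝒰 ∪ 𝒱) := by
  ext A; simp only [lower, mem_inter_iff, mem_ofPred_eq, mem_union]; grind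

theorem isTopologicalBasis_upper_inter_lower :
    IsTopologicalBasis {S : Set (CL X) | ∃ W 𝒱, IsOpen W ∧ IsLocFinOpenFamily 𝒱 ∧
      S = upper W ∩ lower 𝒱} where
  exists_subset_inter := by
    rintro _ ⟨W, 𝒰, hW, h𝒰, rfl⟩ _ ⟨W', 𝒱, hW', h𝒱, rfl⟩ A hA
    have h : upper W ∩ lower 𝒰 ∩ (upper W' ∩ lower 𝒱) = upper (W ∩ W') ∩ lower (𝒰 ∪ 𝒱) := by
      rw [← upper_inter_upper, ← lower_inter_lower, inter_inter_inter_comm]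
    exact ⟨_, ⟨W ∩ W', 𝒰 ∪ 𝒱, hW.inter hW', h𝒰.union h𝒱, rfl⟩, h ▸ hA, h.ge⟩
  sUnion_eq := sUnion_eq_univ_iff.2 fun A =>
    ⟨_, ⟨univ, ∅, isOpen_univ, isLocFinOpenFamily_empty, rfl⟩, by simp [upper_univ, lower_empty]⟩
  eq_generateFrom := by
    refine le_antisymm (le_generateFrom ?_) (le_generateFrom ?_)
    · rintro _ ⟨W, 𝒱, hW, h𝒱, rfl⟩
      exact (isOpen_upper hW).inter (isOpen_lower h𝒱)
    · rintro _ (⟨W, hW, rfl⟩ | ⟨𝒱, h𝒱o, h𝒱f, rfl⟩)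
      · refine isOpen_generateFrom_of_mem ⟨W, ∅, hW, isLocFinOpenFamily_empty, ?_⟩
        rw [lower_empty, inter_univ]; rfl
      · refine isOpen_generateFrom_of_mem ⟨univ, 𝒱, isOpen_univ, ⟨h𝒱o, h𝒱f⟩, ?_⟩
        rw [upper_univ, univ_inter]; rfl

theorem nhds_hasBasis_upper_inter_lower (F : CL X) :
    (𝓝 F).HasBasis (fun p : Set X × Set (Set X) =>
        IsOpen p.1 ∧ IsLocFinOpenFamily p.2 ∧ F ∈ upper p.1 ∩ lower p.2)
      (fun p => upper p.1 ∩ lower p.2) := by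
  refine ⟨fun N => isTopologicalBasis_upper_inter_lower.mem_nhds_iff.trans ⟨?_, ?_⟩⟩
  · rintro ⟨_, ⟨W, 𝒱, hW, h𝒱, rfl⟩, hF, hN⟩
    exact ⟨(W, 𝒱), ⟨hW, h𝒱, hF⟩, hN⟩
  · rintro ⟨p, ⟨hW, h𝒱, hF⟩, hN⟩
    exact ⟨_, ⟨p.1, p.2, hW, h𝒱, rfl⟩, hF, hN⟩

theorem exists_nhds_basis_upper_inter_lower [FirstCountableTopology (CL X)] (F : CL X) :
    ∃ (W : ℕ → Set X) (𝒱 : ℕ → Set (Set X)),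
      (∀ n, IsOpen (W n) ∧ IsLocFinOpenFamily (𝒱 n) ∧ F ∈ upper (W n) ∩ lower (𝒱 n)) ∧
      (𝓝 F).HasAntitoneBasis fun n => upper (W n) ∩ lower (𝒱 n) := by
  obtain ⟨p, hp, hbasis⟩ := (nhds_hasBasis_upper_inter_lower F).exists_antitone_subbasis
  exact ⟨fun n => (p n).1, fun n => (p n).2, hp, hbasis⟩

theorem finite_setOf_inter_subset_singleton {𝒱 : Set (Set X)}
    (h𝒱 : LocallyFinite ((↑) : 𝒱 → Set X)) {E : Set X} (hE𝒱 : ∀ V ∈ 𝒱, (E ∩ V).Nonempty)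
    (x : X) : {V ∈ 𝒱 | E ∩ V ⊆ {x}}.Finite :=
  ((h𝒱.point_finite x).image Subtype.val).subset fun V ⟨hV, hVx⟩ =>
    ⟨⟨V, hV⟩, (eq_singleton_iff_unique_mem.1 ((hE𝒱 V hV).subset_singleton_iff.1 hVx)).1.2, rfl⟩

/-- If no `V ∈ 𝒱` isolating `e` in `E` had `V ∩ W ⊆ O`, then replacing `e` in `E` by one point
of `V ∩ W \ O` for each of the finitely many such `V` would give a member of `upper W ∩ lower 𝒱`
missing `O`. -/
theorem exists_isolating_subset_of_upper_inter_lower_subset [T1Space X] {W : Set X}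
    {𝒱 : Set (Set X)} (h𝒱 : LocallyFinite ((↑) : 𝒱 → Set X)) {E : Set X} (hEW : E ⊆ W)
    (hE𝒱 : ∀ V ∈ 𝒱, (E ∩ V).Nonempty) {e : X} (hcl : IsClosed (E \ {e}))
    (hne : (E \ {e}).Nonempty) {O : Set X} (hOE : O ∩ E ⊆ {e})
    (hsub : upper W ∩ lower 𝒱 ⊆ lower {O}) : ∃ V ∈ 𝒱, E ∩ V ⊆ {e} ∧ V ∩ W ⊆ O := by
  by_contra! hno
  set I := {V ∈ 𝒱 | E ∩ V ⊆ {e}}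
  have hI : I.Finite := finite_setOf_inter_subset_singleton h𝒱 hE𝒱 e
  choose z hzVW hzO using fun V : I => not_subset.1 (hno V V.2.1 V.2.2)
  have : Finite I := hI.to_subtype
  let C : CL X := ⟨(E \ {e}) ∪ range z, hne.mono subset_union_left,
    hcl.union (finite_range z).isClosed⟩
  have hC : C ∈ upper W ∩ lower 𝒱 := by
    refine ⟨union_subset (sdiff_subset.trans hEW) (range_subset_iff.2 fun V => (hzVW V).2),
      fun V hV => ?_⟩
    by_cases hVe : E ∩ V ⊆ {e}
    · exact ⟨z ⟨V, hV, hVe⟩, Or.inr (mem_range_self _), (hzVW ⟨V, hV, hVe⟩).1⟩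
    · obtain ⟨y, ⟨hyE, hyV⟩, hye⟩ := not_subset.1 hVe
      exact ⟨y, Or.inl ⟨hyE, hye⟩, hyV⟩
  obtain ⟨c, hcC, hcO⟩ := hsub hC O rfl
  rcases hcC with hc | ⟨V, rfl⟩
  · exact hc.2 (hOE ⟨hcO, hc.1⟩)
  · exact hzO V hcO

theorem exists_locallyFinite_inter_eq_singleton [T1Space X] [FirstCountableTopology (CL X)]
    {E : Set X} (hE : ∀ F ⊆ E, IsClosed F) (hunc : ¬E.Countable) :
    ∃ (a : ℕ → X) (P : ℕ → Set X),
      (∀ i, IsOpen (P i)) ∧ (∀ i, E ∩ P i = {a i}) ∧ LocallyFinite P := by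
  have hEe (e : X) : (E \ {e}).Nonempty :=
    nonempty_iff_ne_empty.2 fun h => hunc ((countable_singleton e).mono (sdiff_eq_empty.1 h))
  have hEne : E.Nonempty := nonempty_iff_ne_empty.2 fun h => hunc (h ▸ countable_empty)
  let EC : CL X := ⟨E, hEne, hE E subset_rfl⟩
  obtain ⟨W, 𝒱, hbasic, hbasis⟩ := exists_nhds_basis_upper_inter_lower EC
  choose _ h𝒱 hEC using hbasic
  have isolated : ∀ e ∈ E, ∃ n, ∃ V ∈ 𝒱 n, E ∩ V = {e} := by
    intro e he
    have hO : IsOpen (E \ {e})ᶜ := (hE _ sdiff_subset).isOpen_compl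
    have hEO : EC ∈ lower {(E \ {e})ᶜ} := by
      rintro _ rfl
      exact ⟨e, he, fun h => h.2 rfl⟩
    obtain ⟨n, hn⟩ :=
      hbasis.mem_iff.1 ((isOpen_lower (isLocFinOpenFamily_singleton hO)).mem_nhds hEO)
    obtain ⟨V, hV, hVE, -⟩ := exists_isolating_subset_of_upper_inter_lower_subset
      (h𝒱 n).locallyFinite (hEC n).1 (hEC n).2 (hE _ sdiff_subset) (hEe e)
      (O := (E \ {e})ᶜ) (fun x hx => not_not.1 fun hxe => hx.1 ⟨hx.2, hxe⟩) hn
    exact ⟨n, V, hV, ((hEC n).2 V hV).subset_singleton_iff.1 hVE⟩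
  choose! j P hP𝒱 hPE using isolated
  obtain ⟨n, hn⟩ : ∃ n, {e ∈ E | j e = n}.Infinite := by
    by_contra! h
    refine hunc ((countable_iUnion fun n => (h n).countable).mono fun e he => ?_)
    exact mem_iUnion.2 ⟨j e, he, rfl⟩
  let a := hn.natEmbedding
  have hP𝒱n (i : ℕ) : P (a i) ∈ 𝒱 n := by
    have h := hP𝒱 _ (a i).2.1
    rwa [(a i).2.2] at h
  refine ⟨fun i => a i, fun i => P (a i), fun i => (h𝒱 n).isOpen _ (hP𝒱n i),
    fun i => hPE _ (a i).2.1, ?_⟩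
  have hinj : Function.Injective fun i => (⟨P (a i), hP𝒱n i⟩ : 𝒱 n) := by
    intro i k hik
    have h := congrArg (E ∩ ·) (Subtype.ext_iff.1 hik)
    simp only [hPE _ (a _).2.1, singleton_eq_singleton_iff] at h
    exact a.injective (Subtype.ext h)
  exact (h𝒱 n).locallyFinite.comp_injective hinj

theorem not_locallyFinite_of_inter_eq_singleton [T1Space X] [FirstCountableTopology (CL X)]
    {E : Set X} (hE : ∀ F ⊆ E, IsClosed F) (hNI : E ⊆ NI X) (hEnt : E.Nontrivial)
    {a : ℕ → X} {P : ℕ → Set X} (hPo : ∀ i, IsOpen (P i)) (hEP : ∀ i, E ∩ P i = {a i}) :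
    ¬LocallyFinite P := by
  intro hP
  have haEP (i : ℕ) : a i ∈ E ∩ P i := hEP i ▸ mem_singleton (a i)
  let EC : CL X := ⟨E, hEnt.nonempty, hE E subset_rfl⟩
  obtain ⟨W, 𝒱, hbasic, hbasis⟩ := exists_nhds_basis_upper_inter_lower EC
  choose hW h𝒱 hEC using hbasic
  have hpoint : ∀ i, ∀ V ∈ {V ∈ 𝒱 i | E ∩ V ⊆ {a i}}, ∃ t ∈ V ∩ W i, t ≠ a i := by
    rintro i V ⟨hV, hVa⟩
    have haV : a i ∈ V :=
      (eq_singleton_iff_unique_mem.1 (((hEC i).2 V hV).subset_singleton_iff.1 hVa)).1.2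
    exact exists_ne_mem_of_mem_NI (hNI (haEP i).1) (((h𝒱 i).isOpen V hV).inter (hW i))
      ⟨haV, (hEC i).1 (haEP i).1⟩
  have : Nonempty X := ⟨a 0⟩
  -- `O i` removes from `P i` a point `t i V ≠ a i` of each of the finitely many `V ∩ W i` with
  -- `V ∈ 𝒱 i` isolating `a i`, so `upper (W i) ∩ lower (𝒱 i)` does not fit in `lower (range O)`.
  choose! t ht hta using hpoint
  let O (i : ℕ) := P i \ t i '' {V ∈ 𝒱 i | E ∩ V ⊆ {a i}}
  have hO : IsLocFinOpenFamily (range O) := by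
    refine ⟨?_, (hP.subset fun i => sdiff_subset).on_range⟩
    rintro _ ⟨i, rfl⟩
    exact (hPo i).sdiff
      ((finite_setOf_inter_subset_singleton (h𝒱 i).locallyFinite (hEC i).2 _).image _).isClosed
  have hEO : EC ∈ lower (range O) := by
    rintro _ ⟨i, rfl⟩
    exact ⟨a i, (haEP i).1, (haEP i).2, fun ⟨V, hV, hVa⟩ => hta i V hV hVa⟩
  obtain ⟨m, hm⟩ := hbasis.mem_iff.1 ((isOpen_lower hO).mem_nhds hEO)
  have hEe : (E \ {a m}).Nonempty := by
    obtain ⟨y, hyE, hya⟩ := hEnt.exists_ne (a m)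
    exact ⟨y, hyE, hya⟩
  obtain ⟨V, hV, hVa, hVO⟩ := exists_isolating_subset_of_upper_inter_lower_subset
    (h𝒱 m).locallyFinite (hEC m).1 (hEC m).2 (hE _ sdiff_subset) hEe (O := O m)
    (fun x ⟨hxO, hxE⟩ => hEP m ▸ ⟨hxE, hxO.1⟩) fun A hA U hU => hm hA U (hU ▸ mem_range_self m)
  exact (hVO (ht m V ⟨hV, hVa⟩)).2 ⟨V, ⟨hV, hVa⟩, rfl⟩

theorem countable_of_forall_subset_isClosed_of_subset_NI [T1Space X]
    [FirstCountableTopology (CL X)] {E : Set X} (hE : ∀ F ⊆ E, IsClosed F) (hNI : E ⊆ NI X) :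
    E.Countable := by
  by_contra hunc
  obtain ⟨a, P, hPo, hEP, hP⟩ := exists_locallyFinite_inter_eq_singleton hE hunc
  have hEnt : E.Nontrivial := not_subsingleton_iff.1 fun h => hunc h.countable
  exact not_locallyFinite_of_inter_eq_singleton hE hNI hEnt hPo hEP hP

theorem exists_uncountable_forall_subset_isClosed_subset_closure [T1Space X]
    [FirstCountableTopology (CL X)] {x : Ordinal.{u} → X}
    (hx : ∀ o < ω₁, x o ∉ closure (x '' Iio o)) :
    ∃ E ⊆ closure (x '' Iio ω₁), ¬E.Countable ∧ ∀ F ⊆ E, IsClosed F := by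
  let A : CL X :=
    ⟨closure (x '' Iio ω₁), ⟨x 0, subset_closure ⟨0, Ordinal.omega_pos 1, rfl⟩⟩, isClosed_closure⟩
  obtain ⟨W, 𝒱, hbasic, hbasis⟩ := exists_nhds_basis_upper_inter_lower A
  choose _ h𝒱 hA using hbasic
  suffices ∃ n, ¬(𝒱 n).Countable by
    obtain ⟨n, hn⟩ := this
    exact exists_uncountable_forall_subset_isClosed_of_locallyFinite (h𝒱 n).locallyFinite hn
      (hA n).2
  -- Otherwise the indices `γ V` of points `x (γ V) ∈ V` for the countably many `V ∈ 𝒱 n` are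
  -- bounded by some `β < ω₁`, and `C = closure (x '' Iio (succ β))` lies in every basic
  -- neighbourhood of `A` but not in its neighbourhood `lower {Cᶜ}`.
  by_contra! hcount
  have hmeet : ∀ V ∈ ⋃ n, 𝒱 n, ∃ γ < ω₁, x γ ∈ V := by
    simp only [mem_iUnion]
    rintro V ⟨n, hV⟩
    obtain ⟨y, hyA, hyV⟩ := (hA n).2 V hV
    obtain ⟨_, hV', γ, hγ, rfl⟩ := mem_closure_iff.1 hyA V ((h𝒱 n).isOpen V hV) hyV
    exact ⟨γ, hγ, hV'⟩
  choose! γ hγ hxγ using hmeet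
  have : Countable ↥(⋃ n, 𝒱 n) := (countable_iUnion hcount).to_subtype
  set β := ⨆ V : ↥(⋃ n, 𝒱 n), γ V
  have hα : Order.succ β < ω₁ :=
    (Cardinal.isSuccLimit_omega 1).succ_lt (Ordinal.iSup_lt_omega_one fun V => hγ V V.2)
  let C : CL X := ⟨closure (x '' Iio (Order.succ β)),
    ⟨x 0, subset_closure ⟨0, by simp, rfl⟩⟩, isClosed_closure⟩
  have hC (n : ℕ) : C ∈ upper (W n) ∩ lower (𝒱 n) := by
    refine ⟨(closure_mono (image_mono (Iio_subset_Iio hα.le))).trans (hA n).1, fun V hV => ?_⟩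
    have hVn : V ∈ ⋃ n, 𝒱 n := mem_iUnion.2 ⟨n, hV⟩
    have hγβ : γ V ≤ β := Ordinal.le_iSup (fun V : ↥(⋃ n, 𝒱 n) => γ V) ⟨V, hVn⟩
    exact ⟨x (γ V), subset_closure ⟨γ V, Order.lt_succ_of_le hγβ, rfl⟩, hxγ V hVn⟩
  have hAC : A ∈ lower {C.carrier ᶜ} := by
    rintro _ rfl
    exact ⟨x _, subset_closure ⟨_, hα, rfl⟩, hx _ hα⟩
  obtain ⟨n, hn⟩ := hbasis.mem_iff.1
    ((isOpen_lower (isLocFinOpenFamily_singleton isClosed_closure.isOpen_compl)).mem_nhds hAC)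
  obtain ⟨y, hyC, hyC'⟩ := hn (hC n) _ rfl
  exact hyC' hyC

end CL

open CL in
theorem hereditarilySeparable_NI_of_firstCountable
    {X : Type*} [TopologicalSpace X] [T2Space X]
    (h : FirstCountableTopology (CL X)) :
    HereditarilySeparable (NI X) := by
  intro s hs
  by_contra! hsep
  obtain ⟨x, hx⟩ : ∃ x : Ordinal.{0} → X, _ := exists_seq_mem_notMem_closure_image_Iio hsep
  obtain ⟨E, hED, hunc, hE⟩ := exists_uncountable_forall_subset_isClosed_subset_closure
    fun o ho => (hx o ho).2
  have hDNI : x '' Iio ω₁ ⊆ NI X := image_subset_iff.2 fun o ho => hs (hx o ho).1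
  exact hunc (countable_of_forall_subset_isClosed_of_subset_NI hE
    (hED.trans (isClosed_NI.closure_subset_iff.2 hDNI)))
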